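/- Let π ∈ S_n and 1 ≤ i ≤ n-1. If {i, i+1} ∩ {π(i), π(i+1)} = ∅ and the positions π⁻¹(i), π⁻¹(i+1) are not consecutive integers, then |des(π) - des(s_i π s_i⁻¹)| ≤ 1. -/

import Mathlib

/-- Descent number: number of positions `i` (0-indexed, `i+1 < n`) with `π(i) > π(i+1)`. -/
def des {n : ℕ} (π : Equiv.Perm (Fin n)) : ℕ :=
  (Finset.univ.filter (fun i : Fin (n - 1) =>
    π ⟨i.1 + 1, by have := i.2; omega⟩ < π ⟨i.1, by have := i.2; omega⟩)).card

/-- Cyclic descent number: positions taken cyclically, with `π(n+1) := π(1)`. -/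
def cdes {n : ℕ} (π : Equiv.Perm (Fin n)) : ℕ :=
  (Finset.univ.filter (fun i : Fin n =>
    π ⟨(i.1 + 1) % n, Nat.mod_lt _ (by have := i.2; omega)⟩ < π i)).card

lemma filter_card_le3 {m : ℕ} (a b c : ℕ) :
    (Finset.univ.filter (fun j : Fin m => j.1 = a ∨ j.1 = b ∨ j.1 = c)).card ≤ 3 := by
  have h1 : ∀ d : ℕ, (Finset.univ.filter (fun j : Fin m => j.1 = d)).card ≤ 1 := by
    intro d
    apply Finset.card_le_one.mpr
    intro x hx y hy
    simp only [Finset.mem_filter, Finset.mem_univ, true_and] at hx hy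
    exact Fin.ext (hx.trans hy.symm)
  have hsub : Finset.univ.filter (fun j : Fin m => j.1 = a ∨ j.1 = b ∨ j.1 = c) ⊆
      (Finset.univ.filter (fun j : Fin m => j.1 = a) ∪
       Finset.univ.filter (fun j : Fin m => j.1 = b)) ∪
       Finset.univ.filter (fun j : Fin m => j.1 = c) := by
    intro j hj
    simp only [Finset.mem_filter, Finset.mem_univ, true_and, Finset.mem_union] at hj ⊢
    tauto
  have := Finset.card_le_card hsub
  have h2 := Finset.card_union_le
    (Finset.univ.filter (fun j : Fin m => j.1 = a) ∪
     Finset.univ.filter (fun j : Fin m => j.1 = b))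
    (Finset.univ.filter (fun j : Fin m => j.1 = c))
  have h3 := Finset.card_union_le
    (Finset.univ.filter (fun j : Fin m => j.1 = a))
    (Finset.univ.filter (fun j : Fin m => j.1 = b))
  have := h1 a; have := h1 b; have := h1 c
  omega

lemma card_abs_le {α : Type*} [Fintype α] [DecidableEq α] (A B : Finset α)
    (P : α → Prop) [DecidablePred P] (j₀ : α)
    (h_out : ∀ j, ¬ P j → (j ∈ A ↔ j ∈ B))
    (hPj₀ : P j₀) (h_j0A : j₀ ∉ A) (h_j0B : j₀ ∈ B)
    (h3 : ∀ j, P j → j ≠ j₀ → j ∈ B → j ∈ A)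
    (hT : (Finset.univ.filter P).card ≤ 3) :
    |(A.card : ℤ) - B.card| ≤ 1 := by
  set T := Finset.univ.filter P with hTdef
  have memT : ∀ j, j ∈ T ↔ P j := by intro j; simp [hTdef]
  have hBsub : B ⊆ insert j₀ A := by
    intro j hj
    by_cases hjP : P j
    · by_cases hje : j = j₀
      · exact hje ▸ Finset.mem_insert_self _ _
      · exact Finset.mem_insert_of_mem (h3 j hjP hje hj)
    · exact Finset.mem_insert_of_mem ((h_out j hjP).mpr hj)
  have f1 : B.card ≤ A.card + 1 :=
    le_trans (Finset.card_le_card hBsub) (Finset.card_insert_le _ _)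
  have h_j0T : j₀ ∈ T := (memT j₀).mpr hPj₀
  have hAT : (A ∩ T).card ≤ 2 := by
    have hsub : A ∩ T ⊆ T.erase j₀ := by
      intro j hj
      rw [Finset.mem_inter] at hj
      exact Finset.mem_erase.mpr ⟨fun hc => h_j0A (hc ▸ hj.1), hj.2⟩
    have := Finset.card_le_card hsub
    rw [Finset.card_erase_of_mem h_j0T] at this
    omega
  have hBT : 1 ≤ (B ∩ T).card :=
    Finset.card_pos.mpr ⟨j₀, Finset.mem_inter.mpr ⟨h_j0B, h_j0T⟩⟩
  have hsd : A \ T = B \ T := by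
    ext j
    simp only [Finset.mem_sdiff, memT]
    exact ⟨fun ⟨h1, h2⟩ => ⟨(h_out j h2).mp h1, h2⟩, fun ⟨h1, h2⟩ => ⟨(h_out j h2).mpr h1, h2⟩⟩
  have f2 : (A \ T).card + (A ∩ T).card = A.card := Finset.card_sdiff_add_card_inter A T
  have f3 : (B \ T).card + (B ∩ T).card = B.card := Finset.card_sdiff_add_card_inter B T
  have f4 : (A \ T).card = (B \ T).card := by rw [hsd]
  rw [abs_le]
  omega


lemma card_abs_le' {m : ℕ} (F G : Fin m → Prop) [DecidablePred F] [DecidablePred G]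
    (P : Fin m → Prop) [DecidablePred P] (j₀ : Fin m)
    (h_out : ∀ j, ¬ P j → (F j ↔ G j))
    (hPj₀ : P j₀) (hF : ¬ F j₀) (hG : G j₀)
    (h3 : ∀ j, P j → j ≠ j₀ → G j → F j)
    (hT : (Finset.univ.filter P).card ≤ 3) :
    |((Finset.univ.filter F).card : ℤ) - (Finset.univ.filter G).card| ≤ 1 := by
  have memF : ∀ j, j ∈ Finset.univ.filter F ↔ F j := by
    intro j; simp [Finset.mem_filter]
  have memG : ∀ j, j ∈ Finset.univ.filter G ↔ G j := by
    intro j; simp [Finset.mem_filter]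
  apply card_abs_le _ _ P j₀
  · intro j hj; rw [memF, memG]; exact h_out j hj
  · exact hPj₀
  · rw [memF]; exact hF
  · rw [memG]; exact hG
  · intro j h1 h2 h3'; rw [memF]; exact h3 j h1 h2 ((memG j).mp h3')
  · exact hT

lemma lt_congr {α : Type*} [LT α] {a a' b b' : α} (h1 : a = a') (h2 : b = b') :
    a < b ↔ a' < b' := by rw [h1, h2]

set_option maxHeartbeats 1000000 in
lemma desB_aux {n : ℕ} (π : Equiv.Perm (Fin n)) (i : ℕ) (hi : i + 1 < n)
    (hlt : π ⟨i, Nat.lt_of_succ_lt hi⟩ < π ⟨i + 1, hi⟩) :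
    |(des π : ℤ) - des (π * Equiv.swap (⟨i, Nat.lt_of_succ_lt hi⟩ : Fin n) ⟨i + 1, hi⟩)| ≤ 1 := by
  set p : Fin n := ⟨i, by omega⟩ with hp
  set q : Fin n := ⟨i + 1, hi⟩ with hq
  set s := Equiv.swap p q with hs
  obtain ⟨j₀, hj₀⟩ : ∃ j₀ : Fin (n - 1), j₀.1 = i := ⟨⟨i, by omega⟩, rfl⟩
  have sfix : ∀ (k : ℕ) (hk : k < n), k ≠ i → k ≠ i + 1 → s ⟨k, hk⟩ = ⟨k, hk⟩ := by
    intro k hk h1 h2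
    exact Equiv.swap_apply_of_ne_of_ne (by simp [hp, Fin.ext_iff, h1])
      (by simp [hq, Fin.ext_iff, h2])
  have sp : ∀ (k : ℕ) (hk : k < n), k = i → s ⟨k, hk⟩ = q := by
    intro k hk h1
    rw [show (⟨k, hk⟩ : Fin n) = p from Fin.ext (by simp [hp, h1]), hs, Equiv.swap_apply_left]
  have sq : ∀ (k : ℕ) (hk : k < n), k = i + 1 → s ⟨k, hk⟩ = p := by
    intro k hk h1
    rw [show (⟨k, hk⟩ : Fin n) = q from Fin.ext (by simp [hq, h1]), hs, Equiv.swap_apply_right]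
  have h_out : ∀ j : Fin (n - 1), ¬(j.1 + 1 = i ∨ j.1 = i ∨ j.1 = i + 1) →
      (((π * s) ⟨j.1 + 1, by have := j.2; omega⟩ < (π * s) ⟨j.1, by have := j.2; omega⟩) ↔
       (π ⟨j.1 + 1, by have := j.2; omega⟩ < π ⟨j.1, by have := j.2; omega⟩)) := by
    intro j hjT
    push_neg at hjT
    obtain ⟨e1, e2, e3⟩ := hjT
    exact lt_congr (congrArg π (sfix _ _ e1 (by omega))) (congrArg π (sfix _ _ e2 (by omega)))
  have h_j0A : ¬ (π ⟨j₀.1 + 1, by have := j₀.2; omega⟩ < π ⟨j₀.1, by have := j₀.2; omega⟩) := by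
    have g1 : π ⟨j₀.1 + 1, by have := j₀.2; omega⟩ = π q :=
      congrArg π (Fin.ext (by simp [hq]; omega))
    have g2 : π ⟨j₀.1, by have := j₀.2; omega⟩ = π p :=
      congrArg π (Fin.ext (by simp [hp]; omega))
    exact fun hcon => absurd ((lt_congr g1 g2).mp hcon) (not_lt.mpr hlt.le)
  have h_j0B : (π * s) ⟨j₀.1 + 1, by have := j₀.2; omega⟩ <
      (π * s) ⟨j₀.1, by have := j₀.2; omega⟩ := by
    have f1 : (π * s) ⟨j₀.1 + 1, by have := j₀.2; omega⟩ = π p :=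
      congrArg π (sq _ _ (by omega))
    have f2 : (π * s) ⟨j₀.1, by have := j₀.2; omega⟩ = π q :=
      congrArg π (sp _ _ (by omega))
    exact f1.trans_lt (hlt.trans_eq f2.symm)
  have h3 : ∀ j : Fin (n - 1), (j.1 + 1 = i ∨ j.1 = i ∨ j.1 = i + 1) → j ≠ j₀ →
      ((π * s) ⟨j.1 + 1, by have := j.2; omega⟩ < (π * s) ⟨j.1, by have := j.2; omega⟩) →
      (π ⟨j.1 + 1, by have := j.2; omega⟩ < π ⟨j.1, by have := j.2; omega⟩) := by
    intro j hjT hne hjB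
    rcases hjT with e | e | e
    · have f1 : (π * s) ⟨j.1 + 1, by have := j.2; omega⟩ = π q := congrArg π (sp _ _ e)
      have f2 : (π * s) ⟨j.1, by have := j.2; omega⟩ =
          π ⟨j.1, by have := j.2; omega⟩ := congrArg π (sfix _ _ (by omega) (by omega))
      have hjB' : π q < π ⟨j.1, by have := j.2; omega⟩ := f1.symm.trans_lt (hjB.trans_eq f2)
      have g1 : π ⟨j.1 + 1, by have := j.2; omega⟩ = π p :=
        congrArg π (Fin.ext (by simp [hp]; omega))
      exact g1.trans_lt (hlt.trans hjB')
    · exact absurd (Fin.ext (e.trans hj₀.symm)) hne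
    · have f1 : (π * s) ⟨j.1 + 1, by have := j.2; omega⟩ =
          π ⟨j.1 + 1, by have := j.2; omega⟩ := congrArg π (sfix _ _ (by omega) (by omega))
      have f2 : (π * s) ⟨j.1, by have := j.2; omega⟩ = π p := congrArg π (sq _ _ e)
      have hjB' : π ⟨j.1 + 1, by have := j.2; omega⟩ < π p := f1.symm.trans_lt (hjB.trans_eq f2)
      have g2 : π ⟨j.1, by have := j.2; omega⟩ = π q :=
        congrArg π (Fin.ext (by simp [hq]; omega))
      exact (hjB'.trans hlt).trans_eq g2.symm
  have hTcard : (Finset.univ.filter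
      (fun j : Fin (n - 1) => j.1 + 1 = i ∨ j.1 = i ∨ j.1 = i + 1)).card ≤ 3 := by
    refine le_trans (Finset.card_le_card ?_) (filter_card_le3 (m := n - 1) (i - 1) i (i + 1))
    intro j hj
    simp only [Finset.mem_filter, Finset.mem_univ, true_and] at hj ⊢
    omega
  exact card_abs_le'
    (fun j : Fin (n - 1) => π ⟨j.1 + 1, by have := j.2; omega⟩ < π ⟨j.1, by have := j.2; omega⟩)
    (fun j : Fin (n - 1) => (π * s) ⟨j.1 + 1, by have := j.2; omega⟩ <
      (π * s) ⟨j.1, by have := j.2; omega⟩)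
    (fun j : Fin (n - 1) => j.1 + 1 = i ∨ j.1 = i ∨ j.1 = i + 1) j₀
    (fun j hj => (h_out j hj).symm) (Or.inr (Or.inl hj₀)) h_j0A h_j0B h3 hTcard

lemma desB {n : ℕ} (π : Equiv.Perm (Fin n)) (i : ℕ) (hi : i + 1 < n) :
    |(des π : ℤ) - des (π * Equiv.swap (⟨i, Nat.lt_of_succ_lt hi⟩ : Fin n) ⟨i + 1, hi⟩)| ≤ 1 := by
  rcases lt_trichotomy (π ⟨i, by omega⟩) (π ⟨i + 1, hi⟩) with h | h | h
  · exact desB_aux π i hi h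
  · exact absurd (π.injective h) (by simp [Fin.ext_iff])
  · have h' : (π * Equiv.swap (⟨i, by omega⟩ : Fin n) ⟨i + 1, hi⟩) ⟨i, by omega⟩ <
        (π * Equiv.swap (⟨i, by omega⟩ : Fin n) ⟨i + 1, hi⟩) ⟨i + 1, hi⟩ := by
      have f1 : (π * Equiv.swap (⟨i, by omega⟩ : Fin n) ⟨i + 1, hi⟩) ⟨i, by omega⟩ = π ⟨i + 1, hi⟩ :=
        congrArg π (Equiv.swap_apply_left _ _)
      have f2 : (π * Equiv.swap (⟨i, by omega⟩ : Fin n) ⟨i + 1, hi⟩) ⟨i + 1, hi⟩ = π ⟨i, by omega⟩ :=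
        congrArg π (Equiv.swap_apply_right _ _)
      exact f1.trans_lt (h.trans_eq f2.symm)
    have key := desB_aux (π * Equiv.swap (⟨i, by omega⟩ : Fin n) ⟨i + 1, hi⟩) i hi h'
    have e : π * Equiv.swap (⟨i, by omega⟩ : Fin n) ⟨i + 1, hi⟩ * Equiv.swap (⟨i, by omega⟩ : Fin n) ⟨i + 1, hi⟩
        = π := by
      rw [mul_assoc, Equiv.swap_mul_self, mul_one]
    rw [e] at key
    rw [abs_sub_comm]
    exact key

lemma swap_lt_iff {n : ℕ} (p q x y : Fin n) (hq : (q : ℕ) = (p : ℕ) + 1)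
    (h : ¬((x = p ∨ x = q) ∧ (y = p ∨ y = q))) :
    Equiv.swap p q x < Equiv.swap p q y ↔ x < y := by
  by_cases hy : y = p ∨ y = q
  · by_cases hx : x = p ∨ x = q
    · exact absurd ⟨hx, hy⟩ h
    · push_neg at hx
      obtain ⟨hxp, hxq⟩ := hx
      have h1 := Fin.val_ne_of_ne hxp
      have h2 := Fin.val_ne_of_ne hxq
      rw [Equiv.swap_apply_of_ne_of_ne hxp hxq]
      rcases hy with rfl | rfl
      · rw [Equiv.swap_apply_left]; simp only [Fin.lt_def]; omega
      · rw [Equiv.swap_apply_right]; simp only [Fin.lt_def]; omega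
  · push_neg at hy
    obtain ⟨hyp, hyq⟩ := hy
    have h1 := Fin.val_ne_of_ne hyp
    have h2 := Fin.val_ne_of_ne hyq
    rw [Equiv.swap_apply_of_ne_of_ne hyp hyq]
    by_cases hxp : x = p
    · subst hxp; rw [Equiv.swap_apply_left]; simp only [Fin.lt_def]; omega
    · by_cases hxq : x = q
      · subst hxq; rw [Equiv.swap_apply_right]; simp only [Fin.lt_def]; omega
      · rw [Equiv.swap_apply_of_ne_of_ne hxp hxq]

lemma desA {n : ℕ} (τ : Equiv.Perm (Fin n)) (i : ℕ) (hi : i + 1 < n)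
    (hab : ((((τ⁻¹ ⟨i, Nat.lt_of_succ_lt hi⟩ : Fin n) : ℕ) : ℤ) -
      (((τ⁻¹ ⟨i + 1, hi⟩ : Fin n) : ℕ) : ℤ)).natAbs ≠ 1) :
    des (Equiv.swap (⟨i, Nat.lt_of_succ_lt hi⟩ : Fin n) ⟨i + 1, hi⟩ * τ) = des τ := by
  set p : Fin n := ⟨i, by omega⟩ with hp
  set q : Fin n := ⟨i + 1, hi⟩ with hq
  unfold des
  apply congrArg Finset.card
  apply Finset.filter_congr
  intro j _
  simp only [Equiv.Perm.mul_apply]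
  rw [show ((Equiv.swap p q) (τ ⟨j.1 + 1, by have := j.2; omega⟩) <
      (Equiv.swap p q) (τ ⟨j.1, by have := j.2; omega⟩)) ↔ _ from
    swap_lt_iff p q _ _ rfl ?_]
  rintro ⟨h1, h2⟩
  set a : Fin n := ⟨j.1 + 1, by have := j.2; omega⟩
  set b : Fin n := ⟨j.1, by have := j.2; omega⟩
  apply hab
  rcases h1 with h1 | h1 <;> rcases h2 with h2 | h2
  · exact absurd (τ.injective (h1.trans h2.symm)) (by simp [a, b, Fin.ext_iff])
  · have e1 : τ⁻¹ p = a := by rw [← h1, Equiv.Perm.coe_inv, Equiv.symm_apply_apply]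
    have e2 : τ⁻¹ q = b := by rw [← h2, Equiv.Perm.coe_inv, Equiv.symm_apply_apply]
    rw [e1, e2]; simp [a, b]
  · have e1 : τ⁻¹ q = a := by rw [← h1, Equiv.Perm.coe_inv, Equiv.symm_apply_apply]
    have e2 : τ⁻¹ p = b := by rw [← h2, Equiv.Perm.coe_inv, Equiv.symm_apply_apply]
    rw [e1, e2]; simp [a, b]
  · exact absurd (τ.injective (h1.trans h2.symm)) (by simp [a, b, Fin.ext_iff])

theorem abs_des_sub_des_conj_le_one_of_not_consecutive {n : ℕ} (π : Equiv.Perm (Fin n))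
    (i : ℕ) (hi : i + 1 < n) :
    let p : Fin n := ⟨i, by omega⟩
    let q : Fin n := ⟨i + 1, hi⟩
    let s := Equiv.swap p q
    (({p, q} ∩ {π p, π q} : Finset (Fin n)) = ∅) →
    ((((π⁻¹ p : Fin n) : ℕ) : ℤ) - (((π⁻¹ q : Fin n) : ℕ) : ℤ)).natAbs ≠ 1 →
    |(des π : ℤ) - des (s * π * s⁻¹)| ≤ 1 := by
  intro p q s hint hnat
  have key : ∀ x : Fin n, x ∈ ({p, q} : Finset (Fin n)) →
      x ∈ ({π p, π q} : Finset (Fin n)) → False := by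
    intro x h1 h2
    have hx := Finset.mem_inter.mpr ⟨h1, h2⟩
    rw [hint] at hx
    exact Finset.notMem_empty x hx
  have hpp : p ≠ π p := fun h => key p (by simp) (by simp [← h])
  have hpq : p ≠ π q := fun h => key p (by simp) (by simp [← h])
  have hqp : q ≠ π p := fun h => key q (by simp) (by simp [← h])
  have hqq : q ≠ π q := fun h => key q (by simp) (by simp [← h])
  have hne1 : π⁻¹ p ≠ p := fun h => hpp (Equiv.Perm.inv_eq_iff_eq.mp h)
  have hne2 : π⁻¹ p ≠ q := fun h => hpq (Equiv.Perm.inv_eq_iff_eq.mp h)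
  have hne3 : π⁻¹ q ≠ p := fun h => hqp (Equiv.Perm.inv_eq_iff_eq.mp h)
  have hne4 : π⁻¹ q ≠ q := fun h => hqq (Equiv.Perm.inv_eq_iff_eq.mp h)
  have e1 : (π * s)⁻¹ p = π⁻¹ p := by
    rw [mul_inv_rev]
    show s⁻¹ (π⁻¹ p) = π⁻¹ p
    rw [show s⁻¹ = s from Equiv.swap_inv _ _]
    exact Equiv.swap_apply_of_ne_of_ne hne1 hne2
  have e2 : (π * s)⁻¹ q = π⁻¹ q := by
    rw [mul_inv_rev]
    show s⁻¹ (π⁻¹ q) = π⁻¹ q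
    rw [show s⁻¹ = s from Equiv.swap_inv _ _]
    exact Equiv.swap_apply_of_ne_of_ne hne3 hne4
  have hab' : (((((π * s)⁻¹ p : Fin n) : ℕ) : ℤ) -
      ((((π * s)⁻¹ q : Fin n) : ℕ) : ℤ)).natAbs ≠ 1 := by
    rw [e1, e2]; exact hnat
  have e : des (s * π * s⁻¹) = des (π * s) := by
    have hc : s * π * s⁻¹ = Equiv.swap (⟨i, by omega⟩ : Fin n) ⟨i + 1, hi⟩ * (π * s) := by
      rw [show s⁻¹ = s from Equiv.swap_inv _ _, mul_assoc]
    rw [hc]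
    exact desA (π * s) i hi hab'
  rw [e]
  exact desB π i hi
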